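/- Let k ≥ 2. The real vector space {(v,q) : v a vector field with components in 𝒫^k(ℝ²), q ∈ 𝒫^{k-1}(ℝ²), Δv = ∇q and div v = 0} (the local Trefftz space in dimension 2) has dimension 4k + 2. -/

import Mathlib

open MvPolynomial

/-- The formal Laplacian `Δp = ∑ⱼ ∂ⱼ∂ⱼp` of a polynomial in `d` variables. -/
noncomputable def lap {d : ℕ} (p : MvPolynomial (Fin d) ℝ) : MvPolynomial (Fin d) ℝ :=
  ∑ j, pderiv j (pderiv j p)

/-- The formal divergence `div v = ∑ᵢ ∂ᵢvᵢ` of a polynomial vector field. -/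
noncomputable def pdiv {d : ℕ} (v : Fin d → MvPolynomial (Fin d) ℝ) : MvPolynomial (Fin d) ℝ :=
  ∑ i, pderiv i (v i)

/-- The local Trefftz space: pairs `(v, q)` with `v` a vector field with components of total
degree at most `k`, `q` of total degree at most `k - 1`, satisfying `Δv = ∇q` and `div v = 0`. -/
noncomputable def trefftzSpace (d k : ℕ) :
    Submodule ℝ ((Fin d → MvPolynomial (Fin d) ℝ) × MvPolynomial (Fin d) ℝ) where
  carrier := {vq | (∀ i, (vq.1 i).totalDegree ≤ k) ∧ vq.2.totalDegree ≤ k - 1 ∧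
      (∀ i, lap (vq.1 i) = pderiv i vq.2) ∧ pdiv vq.1 = 0}
  add_mem' := by
    rintro ⟨v, q⟩ ⟨w, r⟩ ⟨hv, hq, hvq, hdv⟩ ⟨hw, hr, hwr, hdw⟩
    refine ⟨fun i => le_trans (totalDegree_add _ _) (max_le (hv i) (hw i)),
      le_trans (totalDegree_add _ _) (max_le hq hr), fun i => ?_, ?_⟩
    · show lap (v i + w i) = pderiv i (q + r)
      simp [lap, Finset.sum_add_distrib, ← hvq i, ← hwr i]
    · show pdiv (v + w) = 0
      rw [show pdiv (v + w) = pdiv v + pdiv w by simp [pdiv, Finset.sum_add_distrib],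
        hdv, hdw, add_zero]
  zero_mem' :=
    ⟨fun i => by simp, by simp, fun i => by simp [lap], by simp [pdiv]⟩
  smul_mem' := by
    rintro c ⟨v, q⟩ ⟨hv, hq, hvq, hdv⟩
    refine ⟨fun i => le_trans (totalDegree_smul_le _ _) (hv i),
      le_trans (totalDegree_smul_le _ _) hq, fun i => ?_, ?_⟩
    · show lap (c • v i) = pderiv i (c • q)
      simp [lap, Finset.smul_sum, ← hvq i]
    · show pdiv (c • v) = 0
      rw [show pdiv (c • v) = c • pdiv v by simp [pdiv, Finset.smul_sum], hdv, smul_zero]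

/-!
The Trefftz space is the kernel of the Stokes operator `S (v, q) = (Δv - ∇q, div v)` on
`𝒫ᵏ(ℝ²)² × 𝒫ᵏ⁻¹(ℝ²)`, and `S` maps that space onto `𝒫ᵏ⁻²(ℝ²)² × 𝒫ᵏ⁻¹(ℝ²)`: to solve
`S (v, q) = (f₁, f₂, g)` take `v = ∇φ + rot ψ` and `q = Δφ - ∂₁α - ∂₂β`, where `Δφ = g`, `Δα = f₁`,
`Δβ = f₂` and `Δψ = ∂₁β - ∂₂α`. So everything reduces to the surjectivity of `Δ : 𝒫ⁿ⁺² → 𝒫ⁿ`,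
checked on monomials `xᵃ yᵇ` by induction on `b`. Rank–nullity then gives the dimension
`2 (dim 𝒫ᵏ - dim 𝒫ᵏ⁻²) = 4k + 2`.
-/

namespace MvPolynomial

theorem totalDegree_pderiv_le {R σ : Type*} [CommSemiring R] (i : σ) (p : MvPolynomial σ R) :
    (pderiv i p).totalDegree ≤ p.totalDegree - 1 := by
  refine Finset.sup_le fun m hm => ?_
  rw [mem_support_iff, coeff_pderiv] at hm
  have hle := le_totalDegree (mem_support_iff.mpr (left_ne_zero_of_mul hm))
  rw [Finsupp.sum_add_index' (fun _ => rfl) (fun _ _ _ => rfl), Finsupp.sum_single_index rfl]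
    at hle
  omega

theorem pderiv_mem_restrictTotalDegree {R σ : Type*} [CommSemiring R] (i : σ) {n : ℕ}
    {p : MvPolynomial σ R} (hp : p ∈ restrictTotalDegree σ R (n + 1)) :
    pderiv i p ∈ restrictTotalDegree σ R n := by
  rw [mem_restrictTotalDegree] at hp ⊢
  have := totalDegree_pderiv_le i p
  omega

theorem pderiv_comm {R σ : Type*} [CommRing R] (i j : σ) (p : MvPolynomial σ R) :
    pderiv i (pderiv j p) = pderiv j (pderiv i p) := by
  classical
  have hcomm : ⁅pderiv i, pderiv j⁆ = (0 : Derivation R (MvPolynomial σ R) (MvPolynomial σ R)) :=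
    derivation_ext fun k => by
      rw [Derivation.commutator_apply]
      simp [pderiv_X, Pi.single_apply, apply_ite]
  rw [← sub_eq_zero, ← Derivation.commutator_apply, hcomm, Derivation.zero_apply]

theorem pderiv_X_pow_mul_X_pow {R σ : Type*} [CommSemiring R] {i j : σ} (hij : i ≠ j)
    (a b : ℕ) :
    pderiv i (X i ^ a * X j ^ b : MvPolynomial σ R) = a • (X i ^ (a - 1) * X j ^ b) := by
  simp only [Derivation.leibniz, Derivation.leibniz_pow, pderiv_X_self, pderiv_X_of_ne hij.symm,
    smul_eq_mul, nsmul_eq_mul, mul_zero, mul_one, zero_add]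
  ring

theorem finrank_restrictTotalDegree {R σ : Type*} [CommSemiring R] [StrongRankCondition R]
    [Fintype σ] (n : ℕ) :
    Module.finrank R (restrictTotalDegree σ R n) =
      (n + Fintype.card σ).choose (Fintype.card σ) := by
  classical
  set t := (Finset.range (n + 1)).biUnion fun j => (Finset.univ : Finset σ).finsuppAntidiag j
  have ht : {m : σ →₀ ℕ | (m.sum fun _ e => e) ≤ n} = t := by
    ext m
    simp [t, Finset.mem_finsuppAntidiag, Finsupp.sum_fintype]
  rw [restrictTotalDegree, Module.finrank_eq_nat_card_basis (basisRestrictSupport R _), ht,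
    Nat.card_coe_set_eq, Set.ncard_coe_finset, Finset.card_biUnion]
  · simp [Finset.card_finsuppAntidiag_nat_eq_multichoose, Nat.sum_range_multichoose]
  · intro i _ j _ hij
    simp only [Function.onFun, Finset.disjoint_left, Finset.mem_finsuppAntidiag]
    rintro m ⟨rfl, -⟩ ⟨rfl, -⟩
    exact hij rfl

end MvPolynomial

theorem Submodule.finrank_inf_ker_add_finrank_map {K V W : Type*} [DivisionRing K]
    [AddCommGroup V] [Module K V] [AddCommGroup W] [Module K W] (f : V →ₗ[K] W)
    (p : Submodule K V) [FiniteDimensional K p] :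
    Module.finrank K ↥(p ⊓ LinearMap.ker f) + Module.finrank K ↥(p.map f) =
      Module.finrank K p := by
  rw [← (f.domRestrict p).finrank_range_add_finrank_ker, LinearMap.range_domRestrict,
    LinearMap.ker_domRestrict, ← Submodule.map_comap_subtype,
    LinearEquiv.finrank_eq (Submodule.equivMapOfInjective _ p.subtype_injective _).symm, add_comm]

section Stokes

variable {d : ℕ}

abbrev VelocityPressure (d : ℕ) := (Fin d → MvPolynomial (Fin d) ℝ) × MvPolynomial (Fin d) ℝ

noncomputable def lapLinearMap : MvPolynomial (Fin d) ℝ →ₗ[ℝ] MvPolynomial (Fin d) ℝ :=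
  ∑ j, (pderiv j).toLinearMap ∘ₗ (pderiv j).toLinearMap

@[simp]
theorem lapLinearMap_apply (p : MvPolynomial (Fin d) ℝ) : lapLinearMap p = lap p := by
  simp [lapLinearMap, lap]

@[simp]
theorem lap_add (p q : MvPolynomial (Fin d) ℝ) : lap (p + q) = lap p + lap q := by
  simpa using map_add lapLinearMap p q

@[simp]
theorem lap_sub (p q : MvPolynomial (Fin d) ℝ) : lap (p - q) = lap p - lap q := by
  simpa using map_sub lapLinearMap p q

theorem lap_pderiv (i : Fin d) (p : MvPolynomial (Fin d) ℝ) :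
    lap (pderiv i p) = pderiv i (lap p) := by
  simp [lap, pderiv_comm i]

theorem lap_mem_restrictTotalDegree {n : ℕ} {p : MvPolynomial (Fin d) ℝ}
    (hp : p ∈ restrictTotalDegree (Fin d) ℝ (n + 2)) :
    lap p ∈ restrictTotalDegree (Fin d) ℝ n :=
  Submodule.sum_mem _ fun j _ =>
    pderiv_mem_restrictTotalDegree j (pderiv_mem_restrictTotalDegree j hp)

noncomputable def stokesMap : VelocityPressure d →ₗ[ℝ] VelocityPressure d :=
  (LinearMap.pi fun i => lapLinearMap ∘ₗ LinearMap.proj i ∘ₗ LinearMap.fst ℝ _ _ -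
      (pderiv i).toLinearMap ∘ₗ LinearMap.snd ℝ _ _).prod
    (∑ i, (pderiv i).toLinearMap ∘ₗ LinearMap.proj i ∘ₗ LinearMap.fst ℝ _ _)

@[simp]
theorem stokesMap_apply (vq : VelocityPressure d) :
    stokesMap vq = (fun i => lap (vq.1 i) - pderiv i vq.2, pdiv vq.1) := by
  ext i <;> simp [stokesMap, pdiv]

noncomputable def degreeBoundedIncl (d a b : ℕ) :
    (Fin d → restrictTotalDegree (Fin d) ℝ a) × restrictTotalDegree (Fin d) ℝ b →ₗ[ℝ]
      VelocityPressure d :=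
  (LinearMap.piMap fun _ => (restrictTotalDegree (Fin d) ℝ a).subtype).prodMap
    (restrictTotalDegree (Fin d) ℝ b).subtype

noncomputable def degreeBounded (d a b : ℕ) : Submodule ℝ (VelocityPressure d) :=
  LinearMap.range (degreeBoundedIncl d a b)

instance (d a b : ℕ) : FiniteDimensional ℝ (degreeBounded d a b) :=
  LinearMap.finiteDimensional_range _

theorem mem_degreeBounded {a b : ℕ} {vq : VelocityPressure d} :
    vq ∈ degreeBounded d a b ↔
      (∀ i, vq.1 i ∈ restrictTotalDegree (Fin d) ℝ a) ∧
        vq.2 ∈ restrictTotalDegree (Fin d) ℝ b := by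
  constructor
  · rintro ⟨⟨v, q⟩, rfl⟩
    exact ⟨fun i => (v i).2, q.2⟩
  · rintro ⟨hv, hq⟩
    exact ⟨(fun i => ⟨vq.1 i, hv i⟩, ⟨vq.2, hq⟩), rfl⟩

theorem finrank_degreeBounded (d a b : ℕ) :
    Module.finrank ℝ (degreeBounded d a b) = d * (a + d).choose d + (b + d).choose d := by
  have hinj : Function.Injective (degreeBoundedIncl d a b) := by
    rintro ⟨v, q⟩ ⟨w, r⟩ h
    obtain ⟨hv, hq⟩ := Prod.mk.inj h
    exact Prod.ext (funext fun i => Subtype.ext (congrFun hv i)) (Subtype.ext hq)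
  rw [degreeBounded, LinearMap.finrank_range_of_inj hinj]
  simp [finrank_restrictTotalDegree, Module.finrank_pi_fintype]

theorem trefftzSpace_eq_inf_ker (d k : ℕ) :
    trefftzSpace d k = degreeBounded d k (k - 1) ⊓ LinearMap.ker stokesMap := by
  ext vq
  simp [trefftzSpace, mem_degreeBounded, mem_restrictTotalDegree, funext_iff, sub_eq_zero,
    and_assoc]

theorem map_stokesMap_degreeBounded_le (n : ℕ) :
    (degreeBounded d (n + 2) (n + 1)).map stokesMap ≤ degreeBounded d n (n + 1) := by
  rintro _ ⟨vq, hvq, rfl⟩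
  obtain ⟨hv, hq⟩ := mem_degreeBounded.mp hvq
  rw [stokesMap_apply, mem_degreeBounded]
  exact ⟨fun i => sub_mem (lap_mem_restrictTotalDegree (hv i))
      (pderiv_mem_restrictTotalDegree i hq),
    Submodule.sum_mem _ fun i _ => pderiv_mem_restrictTotalDegree i (hv i)⟩

end Stokes

theorem lap_fin_two (p : MvPolynomial (Fin 2) ℝ) :
    lap p = pderiv 0 (pderiv 0 p) + pderiv 1 (pderiv 1 p) := by
  simp [lap, Fin.sum_univ_two]

-- For `a < 2` (resp. `b < 2`) the truncated exponent is harmless: its coefficient vanishes.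
theorem lap_X_pow_mul_X_pow (a b : ℕ) :
    lap (X 0 ^ a * X 1 ^ b : MvPolynomial (Fin 2) ℝ) =
      (a * (a - 1)) • (X 0 ^ (a - 2) * X 1 ^ b) + (b * (b - 1)) • (X 0 ^ a * X 1 ^ (b - 2)) := by
  have hpderiv₁ (a b : ℕ) : pderiv 1 (X 0 ^ a * X 1 ^ b : MvPolynomial (Fin 2) ℝ) =
      b • (X 0 ^ a * X 1 ^ (b - 1)) := by
    rw [mul_comm, pderiv_X_pow_mul_X_pow (by decide), mul_comm]
  rw [lap_fin_two, pderiv_X_pow_mul_X_pow (by decide), map_nsmul,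
    pderiv_X_pow_mul_X_pow (by decide), hpderiv₁, map_nsmul, hpderiv₁, smul_smul, smul_smul,
    Nat.sub_sub, Nat.sub_sub]

theorem X_pow_mul_X_pow_mem_map_lap {n : ℕ} (a b : ℕ) (hab : a + b ≤ n) :
    (X 0 ^ a * X 1 ^ b : MvPolynomial (Fin 2) ℝ) ∈
      (restrictTotalDegree (Fin 2) ℝ (n + 2)).map lapLinearMap := by
  induction b using Nat.strong_induction_on generalizing a with
  | _ b ih =>
    set M := (restrictTotalDegree (Fin 2) ℝ (n + 2)).map lapLinearMap
    have hlap : lap (X 0 ^ (a + 2) * X 1 ^ b : MvPolynomial (Fin 2) ℝ) ∈ M := by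
      refine ⟨_, (mem_restrictTotalDegree _ _ _).mpr ?_, lapLinearMap_apply _⟩
      refine (totalDegree_mul _ _).trans ?_
      simp only [totalDegree_X_pow]
      omega
    have hlower :
        (b * (b - 1)) • (X 0 ^ (a + 2) * X 1 ^ (b - 2) : MvPolynomial (Fin 2) ℝ) ∈ M := by
      rcases lt_or_ge b 2 with hb | hb
      · interval_cases b <;> simp
      · exact Submodule.smul_of_tower_mem _ _ (ih (b - 2) (by omega) (a + 2) (by omega))
    rw [lap_X_pow_mul_X_pow, Nat.add_sub_cancel] at hlap
    have hmem := M.sub_mem hlap hlower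
    rw [add_sub_cancel_right, ← Nat.cast_smul_eq_nsmul ℝ] at hmem
    exact (M.smul_mem_iff (Nat.cast_ne_zero.mpr (by simp))).mp hmem

theorem restrictTotalDegree_le_map_lap (n : ℕ) :
    restrictTotalDegree (Fin 2) ℝ n ≤
      (restrictTotalDegree (Fin 2) ℝ (n + 2)).map lapLinearMap := by
  rw [restrictTotalDegree, restrictSupport_eq_span, Submodule.span_le]
  rintro _ ⟨m, hm, rfl⟩
  show monomial m (1 : ℝ) ∈ _
  rw [Set.mem_ofPred_eq, Finsupp.sum_fintype _ _ (fun _ => rfl), Fin.sum_univ_two] at hm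
  rw [monomial_eq, Finsupp.prod_fintype _ _ (fun _ => pow_zero _), Fin.prod_univ_two, C_1,
    one_mul]
  exact X_pow_mul_X_pow_mem_map_lap _ _ hm

theorem stokesMap_helmholtz (φ ψ Q : MvPolynomial (Fin 2) ℝ) :
    stokesMap (![pderiv 0 φ - pderiv 1 ψ, pderiv 1 φ + pderiv 0 ψ], lap φ - Q) =
      (![pderiv 0 Q - pderiv 1 (lap ψ), pderiv 0 (lap ψ) + pderiv 1 Q], lap φ) := by
  rw [stokesMap_apply]
  refine Prod.ext (funext fun i => ?_) ?_
  · fin_cases i <;> simp [lap_pderiv]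
  · simp [pdiv, lap_fin_two, pderiv_comm 1 0 ψ]

theorem degreeBounded_le_map_stokesMap (n : ℕ) :
    degreeBounded 2 n (n + 1) ≤ (degreeBounded 2 (n + 2) (n + 1)).map stokesMap := by
  rintro ⟨f, g⟩ hfg
  obtain ⟨hf, hg⟩ := mem_degreeBounded.mp hfg
  dsimp only at hf hg
  obtain ⟨φ, hφ, hlapφ⟩ := restrictTotalDegree_le_map_lap _ hg
  obtain ⟨α, hα, hlapα⟩ := restrictTotalDegree_le_map_lap _ (hf 0)
  obtain ⟨β, hβ, hlapβ⟩ := restrictTotalDegree_le_map_lap _ (hf 1)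
  have hu : pderiv 0 β - pderiv 1 α ∈ restrictTotalDegree (Fin 2) ℝ (n + 1) :=
    sub_mem (pderiv_mem_restrictTotalDegree 0 hβ) (pderiv_mem_restrictTotalDegree 1 hα)
  obtain ⟨ψ, hψ, hlapψ⟩ := restrictTotalDegree_le_map_lap _ hu
  rw [lapLinearMap_apply] at hlapφ hlapα hlapβ hlapψ
  refine ⟨_, mem_degreeBounded.mpr ⟨fun i => ?_, ?_⟩,
    (stokesMap_helmholtz φ ψ (pderiv 0 α + pderiv 1 β)).trans ?_⟩
  · fin_cases i
    · exact sub_mem (pderiv_mem_restrictTotalDegree 0 hφ)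
        (pderiv_mem_restrictTotalDegree 1 hψ)
    · exact add_mem (pderiv_mem_restrictTotalDegree 1 hφ)
        (pderiv_mem_restrictTotalDegree 0 hψ)
  · rw [hlapφ]
    exact sub_mem hg
      (add_mem (pderiv_mem_restrictTotalDegree 0 hα) (pderiv_mem_restrictTotalDegree 1 hβ))
  · rw [hlapψ, hlapφ]
    refine Prod.ext (funext fun i => ?_) rfl
    fin_cases i
    · simp only [Fin.zero_eta, Matrix.cons_val_zero, map_add, map_sub, pderiv_comm 1 0 β,
        ← hlapα, lap_fin_two]
      abel
    · simp only [Fin.mk_one, Matrix.cons_val_one, Matrix.cons_val_fin_one, map_add, map_sub,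
        pderiv_comm 1 0 α, ← hlapβ, lap_fin_two]
      abel

/-- For `k ≥ 2`, the local Trefftz space in dimension 2 has dimension `4k + 2`. -/
theorem finrank_trefftzSpace_dim2 (k : ℕ) (hk : 2 ≤ k) :
    Module.finrank ℝ (trefftzSpace 2 k) = 4 * k + 2 := by
  obtain ⟨n, rfl⟩ := Nat.exists_eq_add_of_le' hk
  have hrank :=
    Submodule.finrank_inf_ker_add_finrank_map stokesMap (degreeBounded 2 (n + 2) (n + 1))
  rw [le_antisymm (map_stokesMap_degreeBounded_le n) (degreeBounded_le_map_stokesMap n),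
    finrank_degreeBounded, finrank_degreeBounded] at hrank
  have hchoose : (n + 2 + 2).choose 2 = (n + 2).choose 2 + (2 * n + 5) := by
    simp only [Nat.choose_two_right, Nat.add_one_sub_one, Nat.mul_add, Nat.add_mul]
    omega
  rw [trefftzSpace_eq_inf_ker, show n + 2 - 1 = n + 1 from rfl]
  linarith
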